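/- arXiv:math/0505083 — 4 statements merged into one kernel-verified Lean document; each statement's English description precedes it below -/
import Mathlib

section
/- Let n ≥ 2 and let 1 ≤ p ≤ n−1 be an integer with 2p ≤ n. Then the function G_p is concave on the space of n×n real symmetric matrices: for all symmetric A, B and all t ∈ [0,1], G_p(t·A + (1−t)·B) ≥ t·G_p(A) + (1−t)·G_p(B). -/
/-!
On symmetric matrices `G_p(A) = p · tr A + (n - 2p) · (λ₁(A) + ⋯ + λ_p(A))`. The trace is linear,
and by Ky Fan's principle `λ₁ + ⋯ + λ_p` is the minimum, over orthonormal families `v₁, …, v_p`,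
of the linear functionals `A ↦ ∑ ⟪vᵢ, A vᵢ⟫`, attained at eigenvectors of `A`; so it is concave,
and `G_p` is concave as soon as `n - 2p ≥ 0`. Ky Fan's inequality is the bathtub principle:
expanding in an eigenbasis `u`, `∑ ⟪vᵢ, A vᵢ⟫ = ∑ⱼ λⱼ μⱼ` with weights `μⱼ = ∑ᵢ ⟪uⱼ, vᵢ⟫² ∈ [0, 1]`
of total mass `p`, and such a weighted sum is smallest when the mass sits on the `p` smallest `λⱼ`.
-/

open Matrix Metric Real

noncomputable section

attribute [local instance] Matrix.normedAddCommGroup Matrix.normedSpace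

/-- The `i`-th partial derivative of `u` at `x`. -/
def pd {n : ℕ} (u : EuclideanSpace ℝ (Fin n) → ℝ) (x : EuclideanSpace ℝ (Fin n)) (i : Fin n) : ℝ :=
  fderiv ℝ u x (EuclideanSpace.single i 1)

/-- The Hessian matrix `∇²u(x)`. -/
def hessian {n : ℕ} (u : EuclideanSpace ℝ (Fin n) → ℝ) (x : EuclideanSpace ℝ (Fin n)) :
    Matrix (Fin n) (Fin n) ℝ :=
  Matrix.of fun i j => pd (fun y => pd u y j) x i

/-- The conformal Schouten matrix `A^u(x) = ∇²u + ∇u ⊗ ∇u − (|∇u|²/2)·Iₙ`. -/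
def schouten {n : ℕ} (u : EuclideanSpace ℝ (Fin n) → ℝ) (x : EuclideanSpace ℝ (Fin n)) :
    Matrix (Fin n) (Fin n) ℝ :=
  hessian u x + Matrix.of (fun i j => pd u x i * pd u x j)
    - ((∑ i, (pd u x i) ^ 2) / 2) • (1 : Matrix (Fin n) (Fin n) ℝ)

/-- Eigenvalues of a symmetric matrix, sorted in nondecreasing order. -/
def sortedEig {n : ℕ} (A : Matrix (Fin n) (Fin n) ℝ) (hA : A.IsHermitian) : Fin n → ℝ :=
  hA.eigenvalues ∘ Tuple.sort hA.eigenvalues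

/-- `G_p(A) = (n−p)·(λ₁+⋯+λ_p) + p·(λ_{p+1}+⋯+λₙ)` (junk value `0` on non-symmetric input). -/
def Gp {n : ℕ} (p : ℕ) (A : Matrix (Fin n) (Fin n) ℝ) : ℝ :=
  if hA : A.IsHermitian then
    ∑ i : Fin n, (if (i : ℕ) < p then ((n : ℝ) - p) else (p : ℝ)) * sortedEig A hA i
  else 0

/-- Operator norm of a matrix, acting on Euclidean space. -/
def opNorm {n : ℕ} (A : Matrix (Fin n) (Fin n) ℝ) : ℝ :=
  ‖LinearMap.toContinuousLinearMap (Matrix.toEuclideanLin A)‖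

/-- `F` is uniformly elliptic with ellipticity constants `0 < l ≤ L`. -/
def UniformlyElliptic {n : ℕ} (F : Matrix (Fin n) (Fin n) ℝ → ℝ) (l L : ℝ) : Prop :=
  0 < l ∧ l ≤ L ∧
    ∀ W N : Matrix (Fin n) (Fin n) ℝ, W.IsHermitian → N.PosSemidef →
      l * opNorm N ≤ F (W + N) - F W ∧ F (W + N) - F W ≤ L * opNorm N

/-- `F` is concave on the space of symmetric matrices. -/
def ConcaveOnSym {n : ℕ} (F : Matrix (Fin n) (Fin n) ℝ → ℝ) : Prop :=
  ∀ A B : Matrix (Fin n) (Fin n) ℝ, A.IsHermitian → B.IsHermitian →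
    ∀ t : ℝ, 0 ≤ t → t ≤ 1 → t * F A + (1 - t) * F B ≤ F (t • A + (1 - t) • B)

open Finset
open scoped RealInnerProductSpace

theorem sum_le_sum_mul_of_threshold {ι : Type*} [Fintype ι] [DecidableEq ι] {s : Finset ι}
    {g μ : ι → ℝ} {c : ℝ} (hg_le : ∀ i ∈ s, g i ≤ c) (hg_ge : ∀ i ∉ s, c ≤ g i)
    (hμ0 : ∀ i, 0 ≤ μ i) (hμ1 : ∀ i, μ i ≤ 1) (hμ : ∑ i, μ i = #s) :
    ∑ i ∈ s, g i ≤ ∑ i, g i * μ i := by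
  have pointwise : ∀ i, (if i ∈ s then g i else 0)
      ≤ g i * μ i + c * ((if i ∈ s then 1 else 0) - μ i) := by
    intro i
    by_cases hi : i ∈ s
    · simp only [if_pos hi]; nlinarith [hg_le i hi, hμ1 i]
    · simp only [if_neg hi]; nlinarith [hg_ge i hi, hμ0 i]
  calc ∑ i ∈ s, g i = ∑ i, if i ∈ s then g i else 0 := (Fintype.sum_ite_mem s g).symm
    _ ≤ ∑ i, (g i * μ i + c * ((if i ∈ s then 1 else 0) - μ i)) :=
        sum_le_sum fun i _ => pointwise i
    _ = ∑ i, g i * μ i := by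
        rw [sum_add_distrib, ← mul_sum, sum_sub_distrib, Fintype.sum_ite_mem, hμ]
        simp

theorem Monotone.exists_threshold {n p : ℕ} {g : Fin n → ℝ} (hg : Monotone g) :
    ∃ c, (∀ i : Fin n, (i : ℕ) < p → g i ≤ c) ∧ ∀ i : Fin n, p ≤ (i : ℕ) → c ≤ g i := by
  by_cases hp : p < n
  · exact ⟨g ⟨p, hp⟩, fun i hi => hg (Fin.le_def.2 (by simp; omega)),
      fun i hi => hg (Fin.le_def.2 hi)⟩
  · exact ⟨⨆ i, g i, fun i _ => le_ciSup (Finite.bddAbove_range g) i,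
      fun i hi => absurd i.isLt (by omega)⟩

theorem Monotone.sum_lt_le_sum_mul {n p : ℕ} {g μ : Fin n → ℝ} (hg : Monotone g)
    (hμ0 : ∀ i, 0 ≤ μ i) (hμ1 : ∀ i, μ i ≤ 1) (hμ : ∑ i, μ i = p) :
    ∑ i ∈ ({i : Fin n | (i : ℕ) < p} : Finset (Fin n)), g i ≤ ∑ i, g i * μ i := by
  have hpn : p ≤ n := by
    have : (p : ℝ) ≤ n := by
      simpa [← hμ] using sum_le_sum fun i (_ : i ∈ univ) => hμ1 i
    exact_mod_cast this
  obtain ⟨c, hc_le, hc_ge⟩ := hg.exists_threshold (p := p)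
  refine sum_le_sum_mul_of_threshold (c := c) (fun i hi => hc_le i (by simpa using hi))
    (fun i hi => hc_ge i (by simpa using hi)) hμ0 hμ1 ?_
  rw [hμ, Fin.card_filter_val_lt, min_eq_right hpn]

def sumSmallestEig {n : ℕ} (p : ℕ) (A : Matrix (Fin n) (Fin n) ℝ) : ℝ :=
  if hA : A.IsHermitian then ∑ i ∈ ({i : Fin n | (i : ℕ) < p} : Finset (Fin n)), sortedEig A hA i
  else 0

namespace Matrix.IsHermitian

variable {n : ℕ} {A : Matrix (Fin n) (Fin n) ℝ}

theorem toEuclideanLin_eigenvectorBasis (hA : A.IsHermitian) (j : Fin n) :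
    toEuclideanLin A (hA.eigenvectorBasis j) = hA.eigenvalues j • hA.eigenvectorBasis j := by
  apply (WithLp.equiv 2 _).injective
  simpa using hA.mulVec_eigenvectorBasis j

theorem inner_toEuclideanLin_self (hA : A.IsHermitian) (x : EuclideanSpace ℝ (Fin n)) :
    ⟪x, toEuclideanLin A x⟫ = ∑ j, hA.eigenvalues j * ⟪hA.eigenvectorBasis j, x⟫ ^ 2 := by
  rw [← hA.eigenvectorBasis.sum_inner_mul_inner]
  refine sum_congr rfl fun j _ => ?_
  rw [← isSymmetric_toEuclideanLin_iff.2 hA, hA.toEuclideanLin_eigenvectorBasis,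
    real_inner_smul_left, real_inner_comm x]
  ring

theorem sumSmallestEig_le_sum_inner (hA : A.IsHermitian) {ι : Type*}
    {v : ι → EuclideanSpace ℝ (Fin n)} (hv : Orthonormal ℝ v) (s : Finset ι) :
    sumSmallestEig #s A ≤ ∑ i ∈ s, ⟪v i, toEuclideanLin A (v i)⟫ := by
  set u := hA.eigenvectorBasis
  set σ := Tuple.sort hA.eigenvalues
  set μ : Fin n → ℝ := fun j => ∑ i ∈ s, ⟪u j, v i⟫ ^ 2
  have hμ0 : ∀ j, 0 ≤ μ j := fun j => sum_nonneg fun i _ => sq_nonneg _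
  have hμ1 : ∀ j, μ j ≤ 1 := fun j => by
    simpa [μ, real_inner_comm, u.orthonormal.1 j] using hv.sum_inner_products_le (u j) (s := s)
  have hμ : ∑ j, μ j = #s := by
    rw [sum_comm]
    simp [real_inner_comm, u.sum_sq_inner_left, hv.1]
  have hsum : ∑ i ∈ s, ⟪v i, toEuclideanLin A (v i)⟫ = ∑ j, hA.eigenvalues j * μ j := by
    simp_rw [hA.inner_toEuclideanLin_self, μ, mul_sum]
    exact sum_comm
  rw [sumSmallestEig, dif_pos hA, hsum, ← Equiv.sum_comp σ]
  exact (Tuple.monotone_sort _).sum_lt_le_sum_mul (fun j => hμ0 _) (fun j => hμ1 _)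
    ((Equiv.sum_comp σ μ).trans hμ)

theorem exists_sumSmallestEig_eq_sum_inner (hA : A.IsHermitian) {p : ℕ} (hp : p ≤ n) :
    ∃ s : Finset (Fin n), #s = p ∧
      sumSmallestEig p A = ∑ i ∈ s, ⟪hA.eigenvectorBasis i,
        toEuclideanLin A (hA.eigenvectorBasis i)⟫ := by
  have hσ := (Tuple.sort hA.eigenvalues).injective
  refine ⟨({i : Fin n | (i : ℕ) < p} : Finset (Fin n)).image (Tuple.sort hA.eigenvalues), ?_, ?_⟩
  · rw [card_image_of_injective _ hσ, Fin.card_filter_val_lt, min_eq_right hp]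
  · rw [sumSmallestEig, dif_pos hA, sum_image fun _ _ _ _ h => hσ h]
    refine sum_congr rfl fun i _ => ?_
    rw [hA.toEuclideanLin_eigenvectorBasis, real_inner_smul_right, real_inner_self_eq_norm_sq,
      hA.eigenvectorBasis.orthonormal.1, one_pow, mul_one, sortedEig, Function.comp_apply]

end Matrix.IsHermitian

section Concavity

variable {n : ℕ}

theorem convex_setOf_isHermitian : Convex ℝ {A : Matrix (Fin n) (Fin n) ℝ | A.IsHermitian} :=
  fun _ hA _ hB a b _ _ _ => (hA.smul (.all a)).add (hB.smul (.all b))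

theorem concaveOn_trace : ConcaveOn ℝ {A : Matrix (Fin n) (Fin n) ℝ | A.IsHermitian} trace :=
  (traceLinearMap (Fin n) ℝ ℝ).concaveOn convex_setOf_isHermitian

theorem inner_toEuclideanLin_smul_add_smul (a b : ℝ) (A B : Matrix (Fin n) (Fin n) ℝ)
    (x : EuclideanSpace ℝ (Fin n)) :
    ⟪x, toEuclideanLin (a • A + b • B) x⟫
      = a * ⟪x, toEuclideanLin A x⟫ + b * ⟪x, toEuclideanLin B x⟫ := by
  simp only [map_add, map_smul, LinearMap.add_apply, LinearMap.smul_apply, inner_add_right,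
    real_inner_smul_right]

theorem concaveOn_sumSmallestEig {p : ℕ} (hp : p ≤ n) :
    ConcaveOn ℝ {A : Matrix (Fin n) (Fin n) ℝ | A.IsHermitian} (sumSmallestEig p) := by
  refine ⟨convex_setOf_isHermitian, fun A hA B hB a b ha hb hab => ?_⟩
  have hC : (a • A + b • B).IsHermitian := convex_setOf_isHermitian hA hB ha hb hab
  obtain ⟨s, rfl, hCs⟩ := hC.exists_sumSmallestEig_eq_sum_inner hp
  have hw := hC.eigenvectorBasis.orthonormal
  calc a • sumSmallestEig #s A + b • sumSmallestEig #s B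
      ≤ a • ∑ i ∈ s, ⟪hC.eigenvectorBasis i, toEuclideanLin A (hC.eigenvectorBasis i)⟫
        + b • ∑ i ∈ s, ⟪hC.eigenvectorBasis i, toEuclideanLin B (hC.eigenvectorBasis i)⟫ :=
        add_le_add (smul_le_smul_of_nonneg_left (hA.sumSmallestEig_le_sum_inner hw s) ha)
          (smul_le_smul_of_nonneg_left (hB.sumSmallestEig_le_sum_inner hw s) hb)
    _ = sumSmallestEig #s (a • A + b • B) := by
        simp only [hCs, inner_toEuclideanLin_smul_add_smul, sum_add_distrib, smul_eq_mul, mul_sum]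

theorem Gp_eq_trace_add_sumSmallestEig (p : ℕ) {A : Matrix (Fin n) (Fin n) ℝ}
    (hA : A.IsHermitian) :
    Gp p A = p * A.trace + ((n : ℝ) - 2 * p) * sumSmallestEig p A := by
  have htrace : A.trace = ∑ i, sortedEig A hA i := by
    simp [hA.trace_eq_sum_eigenvalues, sortedEig, Equiv.sum_comp]
  rw [Gp, sumSmallestEig, dif_pos hA, dif_pos hA, htrace, mul_sum, sum_filter, mul_sum,
    ← sum_add_distrib]
  refine sum_congr rfl fun i _ => ?_
  split_ifs <;> ring

theorem concaveOn_Gp {p : ℕ} (hp : 2 * p ≤ n) :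
    ConcaveOn ℝ {A : Matrix (Fin n) (Fin n) ℝ | A.IsHermitian} (Gp p) := by
  have hcoef : (0 : ℝ) ≤ n - 2 * p := by
    rw [sub_nonneg]; exact_mod_cast hp
  refine ((concaveOn_trace.smul p.cast_nonneg).add
    ((concaveOn_sumSmallestEig (p := p) (by omega)).smul hcoef)).congr fun A hA => ?_
  simp only [Pi.add_apply, smul_eq_mul, Gp_eq_trace_add_sumSmallestEig p hA]

end Concavity

theorem Gp_concave_general (n p : ℕ) (hp3 : 2 * p ≤ n)
    (A B : Matrix (Fin n) (Fin n) ℝ) (hA : A.IsHermitian) (hB : B.IsHermitian)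
    (t : ℝ) (ht0 : 0 ≤ t) (ht1 : t ≤ 1) :
    t * Gp p A + (1 - t) * Gp p B ≤ Gp p (t • A + (1 - t) • B) :=
  (concaveOn_Gp hp3).2 hA hB ht0 (sub_nonneg.2 ht1) (add_sub_cancel t 1)

/-- **Concavity of `G_p`** for `2p ≤ n`, on the space of symmetric matrices. -/
theorem Gp_concave (n p : ℕ) (hn : 2 ≤ n) (hp1 : 1 ≤ p) (hp2 : p ≤ n - 1) (hp3 : 2 * p ≤ n)
    (A B : Matrix (Fin n) (Fin n) ℝ) (hA : A.IsHermitian) (hB : B.IsHermitian)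
    (t : ℝ) (ht0 : 0 ≤ t) (ht1 : t ≤ 1) :
    t * Gp p A + (1 - t) * Gp p B ≤ Gp p (t • A + (1 - t) • B) :=
  Gp_concave_general n p hp3 A B hA hB t ht0 ht1

end
end

section
/- Let n ≥ 2 and let 1 ≤ p ≤ n−1 be an integer. Then G_p is uniformly elliptic: for every n×n real symmetric matrix W and every positive semidefinite real symmetric matrix N, min(p, n−p)·‖N‖ ≤ G_p(W + N) − G_p(W) ≤ max(p, n−p)·tr(N), where ‖N‖ denotes the operator norm of N (its largest eigenvalue). -/
/-!
Write `U(A) = λ_{p+1} + ⋯ + λ_n` for the sum of the `n - p` largest eigenvalues, so that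
`G_p(A) = (n - p)(tr A - U(A)) + p U(A)`. By Ky Fan's maximum principle, `U(A)` is the maximum of
`∑ ⟪u_k, A u_k⟫` over orthonormal `(n - p)`-frames `u`; hence `U` is subadditive, and monotone in
the Loewner order. For `N ⪰ 0` the increment `δ = U(W + N) - U(W)` therefore lies in `[0, tr N]`,
and `G_p(W + N) - G_p(W) = (n - p)(tr N - δ) + p δ` lies between `min(p, n - p) tr N` and
`max(p, n - p) tr N`. It remains to note that `‖N‖ ≤ tr N`.
-/

open Matrix Metric Real

noncomputable section

attribute [local instance] Matrix.normedAddCommGroup Matrix.normedSpace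

open Finset
open scoped RealInnerProductSpace

lemma sum_mul_le_sum_of_separated {ι : Type*} [Fintype ι] {μ t : ι → ℝ} {s : Finset ι}
    (hμ : ∀ i ∈ s, ∀ j ∉ s, μ j ≤ μ i) (ht₀ : ∀ j, 0 ≤ t j) (ht₁ : ∀ j, t j ≤ 1)
    (ht : ∑ j, t j = #s) :
    ∑ j, μ j * t j ≤ ∑ j ∈ s, μ j := by
  classical
  obtain ⟨c, hc_mem, hc_not_mem⟩ : ∃ c, (∀ j ∈ s, c ≤ μ j) ∧ ∀ j ∉ s, μ j ≤ c := by
    rcases s.eq_empty_or_nonempty with rfl | hs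
    · exact ⟨∑ j, |μ j|, by simp, fun j _ =>
        (le_abs_self _).trans (single_le_sum (fun k _ => abs_nonneg (μ k)) (mem_univ j))⟩
    · exact ⟨s.inf' hs μ, fun j hj => inf'_le _ hj,
        fun j hj => le_inf' _ _ fun i hi => hμ i hi j hj⟩
  -- `c` separates the values of `μ` on `s` from those off `s`, so every term of
  -- `∑ (μ j - c) * (𝟙_s j - t j)` is nonnegative, while `∑ (𝟙_s j - t j) = 0`
  have key : 0 ≤ ∑ j, (μ j - c) * ((if j ∈ s then 1 else 0) - t j) := by
    refine sum_nonneg fun j _ => ?_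
    split_ifs with hj
    · exact mul_nonneg (sub_nonneg.2 (hc_mem j hj)) (sub_nonneg.2 (ht₁ j))
    · exact mul_nonneg_of_nonpos_of_nonpos (sub_nonpos.2 (hc_not_mem j hj)) (by linarith [ht₀ j])
  have expand : ∑ j, (μ j - c) * ((if j ∈ s then 1 else 0) - t j)
      = ∑ j ∈ s, μ j - ∑ j, μ j * t j - c * (#s - ∑ j, t j) := by
    simp only [mul_sub, sub_mul, mul_ite, mul_one, mul_zero, sum_sub_distrib, sum_ite_mem,
      univ_inter, mul_sum, sum_const, nsmul_eq_mul]
    ring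
  rw [expand, ht] at key
  linarith

section Eigenbasis

variable {ι E : Type*} [Fintype ι] [NormedAddCommGroup E] [InnerProductSpace ℝ E]
  {T : E →ₗ[ℝ] E} {b : OrthonormalBasis ι ℝ E} {μ : ι → ℝ}

lemma LinearMap.apply_eq_sum_of_eigenbasis (hb : ∀ j, T (b j) = μ j • b j) (x : E) :
    T x = ∑ j, (μ j * ⟪b j, x⟫) • b j := by
  conv_lhs => rw [← b.sum_repr' x]
  simp only [map_sum, map_smul, hb, smul_smul, mul_comm]

lemma LinearMap.inner_apply_self_eq_sum_of_eigenbasis (hb : ∀ j, T (b j) = μ j • b j) (x : E) :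
    ⟪x, T x⟫ = ∑ j, μ j * ⟪b j, x⟫ ^ 2 := by
  simp only [T.apply_eq_sum_of_eigenbasis hb, inner_sum, real_inner_smul_right, real_inner_comm x]
  exact sum_congr rfl fun j _ => by ring

lemma LinearMap.norm_apply_le_of_eigenbasis (hb : ∀ j, T (b j) = μ j • b j) (x : E) :
    ‖T x‖ ≤ (∑ j, |μ j|) * ‖x‖ := by
  rw [T.apply_eq_sum_of_eigenbasis hb, sum_mul]
  refine (norm_sum_le _ _).trans (sum_le_sum fun j _ => ?_)
  rw [norm_smul, b.orthonormal.1 j, mul_one, norm_mul, Real.norm_eq_abs]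
  gcongr
  simpa [b.orthonormal.1 j] using abs_real_inner_le_norm (b j) x

/-- Ky Fan's maximum principle. -/
theorem LinearMap.sum_inner_apply_le_of_eigenbasis (hb : ∀ j, T (b j) = μ j • b j)
    {s : Finset ι} (hμ : ∀ i ∈ s, ∀ j ∉ s, μ j ≤ μ i) {κ : Type*} [Fintype κ] {u : κ → E}
    (hu : Orthonormal ℝ u) (hκ : Fintype.card κ = #s) :
    ∑ k, ⟪u k, T (u k)⟫ ≤ ∑ j ∈ s, μ j := by
  -- `t j` is the squared norm of the projection of `b j` onto the span of `u`
  set t : ι → ℝ := fun j => ∑ k, ⟪b j, u k⟫ ^ 2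
  have ht₁ (j : ι) : t j ≤ 1 := by
    simpa [t, real_inner_comm, b.orthonormal.1 j] using hu.sum_inner_products_le (b j) (s := univ)
  have ht : ∑ j, t j = #s := by
    simp only [t, sum_comm (γ := ι), b.sum_sq_inner_right, hu.1, one_pow, sum_const, card_univ, hκ,
      nsmul_eq_mul, mul_one]
  calc ∑ k, ⟪u k, T (u k)⟫ = ∑ j, μ j * t j := by
        simp only [T.inner_apply_self_eq_sum_of_eigenbasis hb, t, mul_sum]
        exact sum_comm
    _ ≤ ∑ j ∈ s, μ j :=
        sum_mul_le_sum_of_separated hμ (fun j => sum_nonneg fun k _ => sq_nonneg _) ht₁ ht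

lemma LinearMap.sum_inner_apply_eigenbasis (hb : ∀ j, T (b j) = μ j • b j) (s : Finset ι) :
    ∑ j : s, ⟪b j, T (b j)⟫ = ∑ j ∈ s, μ j := by
  simp [hb, real_inner_smul_right, b.orthonormal.1 _, sum_attach s μ]

end Eigenbasis

section SortedEigenvalues

variable {n : ℕ}

lemma sortedEig_monotone {A : Matrix (Fin n) (Fin n) ℝ} (hA : A.IsHermitian) :
    Monotone (sortedEig A hA) :=
  Tuple.monotone_sort hA.eigenvalues

lemma sum_sortedEig {A : Matrix (Fin n) (Fin n) ℝ} (hA : A.IsHermitian) :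
    ∑ j, sortedEig A hA j = A.trace := by
  simp only [hA.trace_eq_sum_eigenvalues, sortedEig, Function.comp_apply,
    Equiv.sum_comp (Tuple.sort hA.eigenvalues) hA.eigenvalues, RCLike.ofReal_real_eq_id, id]

lemma exists_orthonormalBasis_sortedEig {A : Matrix (Fin n) (Fin n) ℝ} (hA : A.IsHermitian) :
    ∃ b : OrthonormalBasis (Fin n) ℝ (EuclideanSpace ℝ (Fin n)),
      ∀ j, toEuclideanLin A (b j) = sortedEig A hA j • b j := by
  refine ⟨hA.eigenvectorBasis.reindex (Tuple.sort hA.eigenvalues).symm, fun j => ?_⟩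
  simp only [OrthonormalBasis.reindex_apply, Equiv.symm_symm]
  exact congrArg (WithLp.toLp 2) (hA.mulVec_eigenvectorBasis _)

def upperIdx (n p : ℕ) : Finset (Fin n) := {j | p ≤ (j : ℕ)}

/-- `λ_{p+1} + ⋯ + λ_n`, the sum of the `n - p` largest eigenvalues. -/
def upperEigSum (A : Matrix (Fin n) (Fin n) ℝ) (hA : A.IsHermitian) (p : ℕ) : ℝ :=
  ∑ j ∈ upperIdx n p, sortedEig A hA j

theorem sum_inner_le_upperEigSum {A : Matrix (Fin n) (Fin n) ℝ} (hA : A.IsHermitian) (p : ℕ)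
    {κ : Type*} [Fintype κ] {u : κ → EuclideanSpace ℝ (Fin n)} (hu : Orthonormal ℝ u)
    (hκ : Fintype.card κ = #(upperIdx n p)) :
    ∑ k, ⟪u k, toEuclideanLin A (u k)⟫ ≤ upperEigSum A hA p := by
  obtain ⟨b, hb⟩ := exists_orthonormalBasis_sortedEig hA
  refine LinearMap.sum_inner_apply_le_of_eigenbasis hb (fun i hi j hj => ?_) hu hκ
  simp only [upperIdx, mem_filter, mem_univ, true_and, not_le] at hi hj
  exact sortedEig_monotone hA (Fin.le_def.2 (by omega))

theorem exists_orthonormal_sum_inner_eq_upperEigSum {A : Matrix (Fin n) (Fin n) ℝ}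
    (hA : A.IsHermitian) (p : ℕ) :
    ∃ u : upperIdx n p → EuclideanSpace ℝ (Fin n), Orthonormal ℝ u ∧
      ∑ k, ⟪u k, toEuclideanLin A (u k)⟫ = upperEigSum A hA p := by
  obtain ⟨b, hb⟩ := exists_orthonormalBasis_sortedEig hA
  exact ⟨fun j => b j, b.orthonormal.comp _ Subtype.val_injective,
    LinearMap.sum_inner_apply_eigenbasis hb _⟩

lemma upperEigSum_le_upperEigSum_add {W N : Matrix (Fin n) (Fin n) ℝ} (hW : W.IsHermitian)
    (hN : N.PosSemidef) (p : ℕ) :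
    upperEigSum W hW p ≤ upperEigSum (W + N) (hW.add hN.isHermitian) p := by
  obtain ⟨u, hu, hWu⟩ := exists_orthonormal_sum_inner_eq_upperEigSum hW p
  have hNu (k) : 0 ≤ ⟪u k, toEuclideanLin N (u k)⟫ :=
    (Matrix.isPositive_toEuclideanLin_iff.2 hN).inner_nonneg_right _
  calc upperEigSum W hW p = ∑ k, ⟪u k, toEuclideanLin W (u k)⟫ := hWu.symm
    _ ≤ ∑ k, ⟪u k, toEuclideanLin (W + N) (u k)⟫ := by
        gcongr with k
        simpa [inner_add_right] using hNu k
    _ ≤ _ := sum_inner_le_upperEigSum _ p hu (Fintype.card_coe _)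

lemma upperEigSum_add_le {A B : Matrix (Fin n) (Fin n) ℝ} (hA : A.IsHermitian)
    (hB : B.IsHermitian) (p : ℕ) :
    upperEigSum (A + B) (hA.add hB) p ≤ upperEigSum A hA p + upperEigSum B hB p := by
  obtain ⟨u, hu, hABu⟩ := exists_orthonormal_sum_inner_eq_upperEigSum (hA.add hB) p
  rw [← hABu]
  simp only [map_add, LinearMap.add_apply, inner_add_right, sum_add_distrib]
  exact add_le_add (sum_inner_le_upperEigSum hA p hu (Fintype.card_coe _))
    (sum_inner_le_upperEigSum hB p hu (Fintype.card_coe _))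

lemma upperEigSum_le_trace {N : Matrix (Fin n) (Fin n) ℝ} (hN : N.PosSemidef) (p : ℕ) :
    upperEigSum N hN.isHermitian p ≤ N.trace := by
  rw [← sum_sortedEig hN.isHermitian]
  exact sum_le_sum_of_subset_of_nonneg (filter_subset _ _)
    fun j _ _ => hN.eigenvalues_nonneg _

lemma Gp_eq {A : Matrix (Fin n) (Fin n) ℝ} (hA : A.IsHermitian) (p : ℕ) :
    Gp p A = (n - p) * (A.trace - upperEigSum A hA p) + p * upperEigSum A hA p := by
  rw [Gp, dif_pos hA, ← sum_sortedEig hA, upperEigSum, upperIdx,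
    ← sum_filter_not_add_sum_filter univ (fun j : Fin n => p ≤ (j : ℕ)) (sortedEig A hA)]
  simp only [ite_mul, sum_ite, ← mul_sum, not_lt, not_le, add_sub_cancel_right]

lemma opNorm_le_trace {N : Matrix (Fin n) (Fin n) ℝ} (hN : N.PosSemidef) :
    opNorm N ≤ N.trace := by
  obtain ⟨b, hb⟩ := exists_orthonormalBasis_sortedEig hN.isHermitian
  have htrace : ∑ j, |sortedEig N hN.isHermitian j| = N.trace := by
    simp only [abs_of_nonneg (hN.eigenvalues_nonneg _), sortedEig, Function.comp_apply]
    exact sum_sortedEig hN.isHermitian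
  refine ContinuousLinearMap.opNorm_le_bound _ (htrace ▸ sum_nonneg fun j _ => abs_nonneg _)
    fun x => ?_
  simpa [htrace] using LinearMap.norm_apply_le_of_eigenbasis hb x

end SortedEigenvalues

theorem Gp_uniformly_elliptic_general (n p : ℕ) (hp2 : p ≤ n - 1)
    (W N : Matrix (Fin n) (Fin n) ℝ) (hW : W.IsHermitian) (hN : N.PosSemidef) :
    (min (p : ℝ) ((n : ℝ) - p)) * opNorm N ≤ Gp p (W + N) - Gp p W ∧
    Gp p (W + N) - Gp p W ≤ (max (p : ℝ) ((n : ℝ) - p)) * N.trace := by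
  have hWN := hW.add hN.isHermitian
  set δ := upperEigSum (W + N) hWN p - upperEigSum W hW p
  have hδ₀ : 0 ≤ δ := sub_nonneg.2 (upperEigSum_le_upperEigSum_add hW hN p)
  have hδ : 0 ≤ N.trace - δ := by
    linarith [upperEigSum_add_le hW hN.isHermitian p, upperEigSum_le_trace hN p]
  have hdiff : Gp p (W + N) - Gp p W = (n - p) * (N.trace - δ) + p * δ := by
    rw [Gp_eq hWN, Gp_eq hW, trace_add]
    ring
  have hmin : 0 ≤ min (p : ℝ) (n - p) :=
    le_min p.cast_nonneg (sub_nonneg.2 (by exact_mod_cast hp2.trans (Nat.sub_le n 1)))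
  rw [hdiff]
  constructor
  · calc min (p : ℝ) (n - p) * opNorm N ≤ min (p : ℝ) (n - p) * (N.trace - δ + δ) := by
          rw [sub_add_cancel]
          gcongr
          exact opNorm_le_trace hN
      _ ≤ (n - p) * (N.trace - δ) + p * δ := by
          rw [mul_add]
          gcongr
          exacts [min_le_right _ _, min_le_left _ _]
  · calc (n - p) * (N.trace - δ) + p * δ ≤ max (p : ℝ) (n - p) * (N.trace - δ + δ) := by
          rw [mul_add]
          gcongr
          exacts [le_max_right _ _, le_max_left _ _]
      _ = max (p : ℝ) (n - p) * N.trace := by rw [sub_add_cancel]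

/-- **Uniform ellipticity of `G_p`**: for symmetric `W` and positive semidefinite `N`,
`min(p, n−p)·‖N‖ ≤ G_p(W+N) − G_p(W) ≤ max(p, n−p)·tr N`, with `‖N‖` the operator norm. -/
theorem Gp_uniformly_elliptic (n p : ℕ) (hn : 2 ≤ n) (hp1 : 1 ≤ p) (hp2 : p ≤ n - 1)
    (W N : Matrix (Fin n) (Fin n) ℝ) (hW : W.IsHermitian) (hN : N.PosSemidef) :
    (min (p : ℝ) ((n : ℝ) - p)) * opNorm N ≤ Gp p (W + N) - Gp p W ∧
    Gp p (W + N) - Gp p W ≤ (max (p : ℝ) ((n : ℝ) - p)) * N.trace :=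
  Gp_uniformly_elliptic_general n p hp2 W N hW hN

end
end

section
/- Let n ≥ 3, let 1 ≤ p ≤ n−1 be an integer, let c > 0, λ > 0 and x₀ ∈ ℝⁿ. Define u : ℝⁿ → ℝ by u(x) = log( (λ² + |x − x₀|²) / (2λ·√(p(n−p)/c)) ). Then u is a smooth solution of G_p(A^u(x)) = c·e^{−2u(x)} for all x ∈ ℝⁿ. -/
open Matrix Metric Real

noncomputable section

attribute [local instance] Matrix.normedAddCommGroup Matrix.normedSpace

-- auxiliary lemmas

lemma isHermitian_smul_one {n : ℕ} (μ : ℝ) :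
    ((μ : ℝ) • (1 : Matrix (Fin n) (Fin n) ℝ)).IsHermitian := by
  simp [Matrix.IsHermitian, Matrix.conjTranspose_smul]

lemma eigenvalues_smul_one {n : ℕ} (μ : ℝ)
    (h : ((μ : ℝ) • (1 : Matrix (Fin n) (Fin n) ℝ)).IsHermitian) (j : Fin n) :
    h.eigenvalues j = μ := by
  have hv := h.mulVec_eigenvectorBasis j
  rw [smul_mulVec, one_mulVec] at hv
  have hnz : ⇑(h.eigenvectorBasis j) ≠ 0 := by
    intro h0
    exact h.eigenvectorBasis.orthonormal.ne_zero j (by ext k; exact congrFun h0 k)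
  have : (μ - h.eigenvalues j) • ⇑(h.eigenvectorBasis j) = 0 := by
    rw [sub_smul, hv, sub_self]
  rcases smul_eq_zero.mp this with h1 | h1
  · linarith [sub_eq_zero.mp h1]
  · exact absurd h1 hnz

lemma sortedEig_smul_one {n : ℕ} (μ : ℝ)
    (h : ((μ : ℝ) • (1 : Matrix (Fin n) (Fin n) ℝ)).IsHermitian) (i : Fin n) :
    sortedEig _ h i = μ :=
  eigenvalues_smul_one μ h _

lemma Gp_smul_one {n p : ℕ} (hpn : p ≤ n) (μ : ℝ) :
    Gp p ((μ : ℝ) • (1 : Matrix (Fin n) (Fin n) ℝ)) = 2 * p * ((n : ℝ) - p) * μ := by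
  rw [Gp, dif_pos (isHermitian_smul_one μ)]
  simp only [sortedEig_smul_one]
  rw [Fin.sum_univ_eq_sum_range (fun k => (if k < p then ((n : ℝ) - p) else (p : ℝ)) * μ) n]
  have h1 : ∑ k ∈ Finset.Ico 0 p, (if k < p then ((n : ℝ) - p) else (p : ℝ)) * μ
      = (p : ℝ) * (((n : ℝ) - p) * μ) := by
    rw [Finset.sum_congr rfl fun k hk => by rw [if_pos (Finset.mem_Ico.mp hk).2]]
    rw [Finset.sum_const, Nat.card_Ico, Nat.sub_zero, nsmul_eq_mul]
  have h2 : ∑ k ∈ Finset.Ico p n, (if k < p then ((n : ℝ) - p) else (p : ℝ)) * μ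
      = ((n : ℝ) - p) * ((p : ℝ) * μ) := by
    rw [Finset.sum_congr rfl fun k hk => by rw [if_neg (not_lt.mpr (Finset.mem_Ico.mp hk).1)]]
    rw [Finset.sum_const, Nat.card_Ico, nsmul_eq_mul, Nat.cast_sub hpn]
  rw [Finset.range_eq_Ico, ← Finset.sum_Ico_consecutive _ (Nat.zero_le p) hpn, h1, h2]
  ring

/-- **The standard bubble solves the equation**: for `c, λ > 0` and `x₀ ∈ ℝⁿ`, the function
`u(x) = log((λ² + |x−x₀|²)/(2λ√(p(n−p)/c)))` is a smooth solution of
`G_p(A^u) = c·e^{-2u}` on all of `ℝⁿ`. -/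
theorem bubble_solves (n p : ℕ) (hn : 3 ≤ n) (hp1 : 1 ≤ p) (hp2 : p ≤ n - 1)
    (c lam : ℝ) (hc : 0 < c) (hlam : 0 < lam) (x₀ : EuclideanSpace ℝ (Fin n))
    (u : EuclideanSpace ℝ (Fin n) → ℝ)
    (hu : ∀ x, u x = Real.log ((lam ^ 2 + ‖x - x₀‖ ^ 2) /
      (2 * lam * Real.sqrt ((p : ℝ) * ((n : ℝ) - p) / c)))) :
    ContDiff ℝ (⊤ : ℕ∞) u ∧ ∀ x, Gp p (schouten u x) = c * Real.exp (-2 * u x) := by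
  have hpn : p + 1 ≤ n := by omega
  have hnp : (1 : ℝ) ≤ (n : ℝ) - p := by
    have : ((p : ℝ) + 1) ≤ (n : ℝ) := by exact_mod_cast hpn
    linarith
  have hp0 : (0 : ℝ) < p := by exact_mod_cast hp1
  have hsq : (0 : ℝ) ≤ (p : ℝ) * ((n : ℝ) - p) / c := by positivity
  set K : ℝ := 2 * lam * Real.sqrt ((p : ℝ) * ((n : ℝ) - p) / c) with hKdef
  have hK : 0 < K := by
    have : 0 < Real.sqrt ((p : ℝ) * ((n : ℝ) - p) / c) :=
      Real.sqrt_pos.mpr (by positivity)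
    positivity
  have hK2 : K ^ 2 = 4 * lam ^ 2 * ((p : ℝ) * ((n : ℝ) - p) / c) := by
    rw [hKdef, mul_pow, mul_pow, Real.sq_sqrt hsq]; ring
  set f : EuclideanSpace ℝ (Fin n) → ℝ := fun y => lam ^ 2 + ‖y - x₀‖ ^ 2 with hfdef
  have hf0 : ∀ y, 0 < f y := fun y => by positivity
  -- rewrite u
  have hu' : u = fun y => Real.log (f y) - Real.log K := by
    funext y
    rw [hu y]
    exact Real.log_div (ne_of_gt (hf0 y)) (ne_of_gt hK)
  -- derivative of f
  have hDf : ∀ x, HasFDerivAt f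
      (2 • (innerSL ℝ (x - x₀)).comp (ContinuousLinearMap.id ℝ (EuclideanSpace ℝ (Fin n)))) x := by
    intro x
    have h1 : HasFDerivAt (fun y : EuclideanSpace ℝ (Fin n) => y - x₀)
        (ContinuousLinearMap.id ℝ (EuclideanSpace ℝ (Fin n))) x := (hasFDerivAt_id x).sub_const x₀
    exact (h1.norm_sq).const_add (lam ^ 2)
  -- derivative of u
  have hDu : ∀ x, HasFDerivAt u
      ((f x)⁻¹ • (2 • (innerSL ℝ (x - x₀)).comp
        (ContinuousLinearMap.id ℝ (EuclideanSpace ℝ (Fin n))))) x := by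
    intro x
    rw [hu']
    exact ((hDf x).log (ne_of_gt (hf0 x))).sub_const (Real.log K)
  have hpd : ∀ x i, pd u x i = 2 * (x - x₀) i / f x := by
    intro x i
    rw [pd, (hDu x).fderiv]
    simp [real_inner_comm, EuclideanSpace.inner_single_left, EuclideanSpace.inner_single_right, div_eq_mul_inv]
    ring
  have hpdfun : ∀ j, (fun y => pd u y j) = fun y => (2 * (y - x₀) j) * (f y)⁻¹ := by
    intro j; funext y; rw [hpd y j, div_eq_mul_inv]
  have hDpdj : ∀ (x : EuclideanSpace ℝ (Fin n)) (j : Fin n),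
      HasFDerivAt (fun y => (2 * (y - x₀) j) * (f y)⁻¹)
      ((2 * (x - x₀) j) • ((-(f x ^ 2)⁻¹) • (2 • (innerSL ℝ (x - x₀)).comp
          (ContinuousLinearMap.id ℝ (EuclideanSpace ℝ (Fin n)))))
        + (f x)⁻¹ • (2 • ((EuclideanSpace.proj j : EuclideanSpace ℝ (Fin n) →L[ℝ] ℝ).comp
          (ContinuousLinearMap.id ℝ (EuclideanSpace ℝ (Fin n)))))) x := by
    intro x j
    have h1 : HasFDerivAt (fun y : EuclideanSpace ℝ (Fin n) => y - x₀)
        (ContinuousLinearMap.id ℝ (EuclideanSpace ℝ (Fin n))) x := (hasFDerivAt_id x).sub_const x₀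
    have hc : HasFDerivAt (fun y : EuclideanSpace ℝ (Fin n) => 2 * (y - x₀) j)
        (2 • ((EuclideanSpace.proj j : EuclideanSpace ℝ (Fin n) →L[ℝ] ℝ).comp
          (ContinuousLinearMap.id ℝ (EuclideanSpace ℝ (Fin n))))) x := by
      have h2 := ((EuclideanSpace.proj j :
        EuclideanSpace ℝ (Fin n) →L[ℝ] ℝ).hasFDerivAt.comp x h1).const_mul (2 : ℝ)
      exact h2.congr_fderiv (by ext z; simp)
    have hd : HasFDerivAt (fun y => (f y)⁻¹)
        ((-(f x ^ 2)⁻¹) • (2 • (innerSL ℝ (x - x₀)).comp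
          (ContinuousLinearMap.id ℝ (EuclideanSpace ℝ (Fin n))))) x :=
      (hasDerivAt_inv (ne_of_gt (hf0 x))).comp_hasFDerivAt x (hDf x)
    exact hc.mul hd
  have hhess : ∀ (x : EuclideanSpace ℝ (Fin n)) (i j : Fin n),
      pd (fun y => pd u y j) x i
        = 2 * (x - x₀) j * (-(f x ^ 2)⁻¹ * (2 * (x - x₀) i))
          + (f x)⁻¹ * (2 * (if j = i then 1 else 0)) := by
    intro x i j
    rw [hpdfun j, pd, (hDpdj x j).fderiv]
    simp [EuclideanSpace.inner_single_right, EuclideanSpace.single_apply]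
  have hμ : ∀ x : EuclideanSpace ℝ (Fin n),
      schouten u x = (2 * lam ^ 2 / (f x) ^ 2) • (1 : Matrix (Fin n) (Fin n) ℝ) := by
    intro x
    have hn2 : ∑ i, ((x - x₀) i) ^ 2 = ‖x - x₀‖ ^ 2 := by
      rw [EuclideanSpace.norm_eq, Real.sq_sqrt (by positivity)]
      simp [sq_abs]
    have hsum : ∑ i, (pd u x i) ^ 2 = 4 * ‖x - x₀‖ ^ 2 / (f x) ^ 2 := by
      calc ∑ i, (pd u x i) ^ 2 = ∑ i, ((x - x₀) i) ^ 2 * (4 / f x ^ 2) :=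
            Finset.sum_congr rfl fun i _ => by
              rw [hpd x i]
              have h0 : f x ≠ 0 := ne_of_gt (hf0 x)
              field_simp
              ring
        _ = ‖x - x₀‖ ^ 2 * (4 / f x ^ 2) := by rw [← Finset.sum_mul, hn2]
        _ = 4 * ‖x - x₀‖ ^ 2 / f x ^ 2 := by ring
    ext i j
    simp only [schouten, Matrix.add_apply, Matrix.sub_apply, Matrix.of_apply, Matrix.smul_apply,
      Matrix.one_apply, hessian, smul_eq_mul]
    rw [hhess x i j, hsum, hpd x i, hpd x j]
    have hfx : f x = lam ^ 2 + ‖x - x₀‖ ^ 2 := rfl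
    rcases eq_or_ne i j with rfl | hij
    · simp only [if_pos rfl]
      rw [hfx]
      have h0 : lam ^ 2 + ‖x - x₀‖ ^ 2 ≠ 0 := ne_of_gt (hf0 x)
      field_simp
      ring
    · simp only [if_neg hij, if_neg (Ne.symm hij)]
      have h0 : lam ^ 2 + ‖x - x₀‖ ^ 2 ≠ 0 := ne_of_gt (hf0 x)
      rw [hfx]
      field_simp
      ring
  refine ⟨?_, ?_⟩
  · rw [hu']
    exact ((contDiff_const.add ((contDiff_id.sub contDiff_const).norm_sq ℝ)).log
      (fun y => ne_of_gt (hf0 y))).sub contDiff_const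
  · intro x
    rw [hμ x, Gp_smul_one (by omega : p ≤ n), hu x]
    have ht : 0 < (lam ^ 2 + ‖x - x₀‖ ^ 2) / K := div_pos (hf0 x) hK
    have hexp : Real.exp (-2 * Real.log ((lam ^ 2 + ‖x - x₀‖ ^ 2) / K))
        = (((lam ^ 2 + ‖x - x₀‖ ^ 2) / K)⁻¹) ^ 2 := by
      rw [show (-2 : ℝ) * Real.log ((lam ^ 2 + ‖x - x₀‖ ^ 2) / K)
          = Real.log ((((lam ^ 2 + ‖x - x₀‖ ^ 2) / K)⁻¹) ^ 2) by
        rw [Real.log_pow, Real.log_inv]; push_cast; ring]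
      exact Real.exp_log (by positivity)
    rw [hexp]
    have hfx : f x = lam ^ 2 + ‖x - x₀‖ ^ 2 := rfl
    have h0 : lam ^ 2 + ‖x - x₀‖ ^ 2 ≠ 0 := ne_of_gt (hf0 x)
    have h0 : lam ^ 2 + ‖x - x₀‖ ^ 2 ≠ 0 := ne_of_gt (hf0 x)
    have hinv : (((lam ^ 2 + ‖x - x₀‖ ^ 2) / K)⁻¹) ^ 2
        = K ^ 2 / (lam ^ 2 + ‖x - x₀‖ ^ 2) ^ 2 := by
      rw [inv_div, div_pow]
    rw [hfx, hinv, hK2]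
    field_simp
    ring


end
end

section
/- Let n ≥ 3, let 1 ≤ p ≤ n−1 be an integer, and let Ω ⊂ ℝⁿ be a bounded domain. Suppose w and v are C² on Ω, continuous on the closure of Ω, and satisfy G_p(A^w(x)) = −e^{−2w(x)} and G_p(A^v(x)) = −e^{−2v(x)} for all x ∈ Ω, with w = v on ∂Ω. Then w = v on all of Ω. (Uniqueness, via the maximum principle, of solutions with negative curvature constant −1 subject to Dirichlet boundary data.) -/
open Matrix Metric Real

noncomputable section

attribute [local instance] Matrix.normedAddCommGroup Matrix.normedSpace

/-! If `w - v` had a positive maximum on `closure Ω`, it would be attained at an interior point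
`x₀`, since `w = v` on `∂Ω`. There `∇w = ∇v`, so `A^v - A^w = ∇²v - ∇²w` is positive
semidefinite. As `G_p` is a combination of the sorted eigenvalues with nonnegative weights,
Weyl's monotonicity theorem gives `G_p(A^w) ≤ G_p(A^v)` at `x₀`, that is
`-e^{-2w} ≤ -e^{-2v}`, so `w(x₀) ≤ v(x₀)`: a contradiction. Exchanging `w` and `v` gives `w = v`. -/

open Filter Topology Module Submodule
open scoped InnerProductSpace

theorem Module.Basis.finrank_span_image {K V ι : Type*} [DivisionRing K] [AddCommGroup V]
    [Module K V] (b : Basis ι K V) (s : Finset ι) :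
    finrank K (span K (b '' s)) = s.card := by
  classical
  rw [← Finset.coe_image,
    finrank_span_finset_eq_card (by simpa using (b.linearIndepOn s).id_image),
    Finset.card_image_of_injective _ b.injective]

theorem Submodule.exists_mem_inf_ne_zero_of_finrank_lt {K V : Type*} [DivisionRing K]
    [AddCommGroup V] [Module K V] [FiniteDimensional K V] {W₁ W₂ : Submodule K V}
    (h : finrank K V < finrank K W₁ + finrank K W₂) : ∃ x ∈ W₁ ⊓ W₂, x ≠ 0 := by
  refine exists_mem_ne_zero_of_ne_bot fun hbot => ?_
  have := finrank_sup_add_finrank_inf_eq W₁ W₂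
  rw [hbot, finrank_bot] at this
  have := (W₁ ⊔ W₂).finrank_le
  omega

section Eigenvalues

variable {ι : Type*} [Fintype ι] [DecidableEq ι] {A B : Matrix ι ι ℝ}

theorem Matrix.IsHermitian.toEuclideanLin_eigenvectorBasis_s16 (hA : A.IsHermitian) (j : ι) :
    A.toEuclideanLin (hA.eigenvectorBasis j) = hA.eigenvalues j • hA.eigenvectorBasis j :=
  WithLp.ofLp_injective 2 (hA.mulVec_eigenvectorBasis j)

theorem Matrix.IsHermitian.inner_toEuclideanLin_self_s16 (hA : A.IsHermitian)
    (x : EuclideanSpace ℝ ι) :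
    ⟪x, A.toEuclideanLin x⟫_ℝ = ∑ j, hA.eigenvalues j * hA.eigenvectorBasis.repr x j ^ 2 := by
  rw [← hA.eigenvectorBasis.sum_inner_mul_inner]
  refine Finset.sum_congr rfl fun j _ => ?_
  rw [← (isSymmetric_toEuclideanLin_iff.mpr hA), hA.toEuclideanLin_eigenvectorBasis_s16,
    real_inner_smul_left, hA.eigenvectorBasis.repr_apply_apply, real_inner_comm x]
  ring

theorem Matrix.IsHermitian.norm_sq_eq_sum_repr (hA : A.IsHermitian) (x : EuclideanSpace ℝ ι) :
    ‖x‖ ^ 2 = ∑ j, hA.eigenvectorBasis.repr x j ^ 2 := by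
  rw [← real_inner_self_eq_norm_sq, ← hA.eigenvectorBasis.sum_inner_mul_inner]
  refine Finset.sum_congr rfl fun j _ => ?_
  rw [hA.eigenvectorBasis.repr_apply_apply, real_inner_comm x, sq]

theorem Matrix.IsHermitian.inner_toEuclideanLin_self_le (hA : A.IsHermitian)
    {x : EuclideanSpace ℝ ι} {c : ℝ}
    (hc : ∀ j, hA.eigenvectorBasis.repr x j ≠ 0 → hA.eigenvalues j ≤ c) :
    ⟪x, A.toEuclideanLin x⟫_ℝ ≤ c * ‖x‖ ^ 2 := by
  rw [hA.inner_toEuclideanLin_self_s16, hA.norm_sq_eq_sum_repr, Finset.mul_sum]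
  refine Finset.sum_le_sum fun j _ => ?_
  by_cases hj : hA.eigenvectorBasis.repr x j = 0
  · simp [hj]
  · exact mul_le_mul_of_nonneg_right (hc j hj) (sq_nonneg _)

theorem Matrix.IsHermitian.le_inner_toEuclideanLin_self (hA : A.IsHermitian)
    {x : EuclideanSpace ℝ ι} {c : ℝ}
    (hc : ∀ j, hA.eigenvectorBasis.repr x j ≠ 0 → c ≤ hA.eigenvalues j) :
    c * ‖x‖ ^ 2 ≤ ⟪x, A.toEuclideanLin x⟫_ℝ := by
  rw [hA.inner_toEuclideanLin_self_s16, hA.norm_sq_eq_sum_repr, Finset.mul_sum]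
  refine Finset.sum_le_sum fun j _ => ?_
  by_cases hj : hA.eigenvectorBasis.repr x j = 0
  · simp [hj]
  · exact mul_le_mul_of_nonneg_right (hc j hj) (sq_nonneg _)

theorem Matrix.PosSemidef.inner_toEuclideanLin_self_mono (hd : (B - A).PosSemidef)
    (x : EuclideanSpace ℝ ι) : ⟪x, A.toEuclideanLin x⟫_ℝ ≤ ⟪x, B.toEuclideanLin x⟫_ℝ := by
  have := (isPositive_toEuclideanLin_iff.mpr hd).inner_nonneg_right x
  rwa [map_sub, LinearMap.sub_apply, inner_sub_right, sub_nonneg] at this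

end Eigenvalues

theorem sortedEig_mono {n : ℕ} {A B : Matrix (Fin n) (Fin n) ℝ} (hA : A.IsHermitian)
    (hB : B.IsHermitian) (hd : (B - A).PosSemidef) (i : Fin n) :
    sortedEig A hA i ≤ sortedEig B hB i := by
  -- Courant–Fischer: `V` carries the `i + 1` smallest eigenvalues of `B`, `W` the `n - i`
  -- largest of `A`, so they share a nonzero vector.
  set σA := Tuple.sort hA.eigenvalues
  set σB := Tuple.sort hB.eigenvalues
  set V := span ℝ (hB.eigenvectorBasis.toBasis '' ((Finset.Iic i).image σB : Finset (Fin n)))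
  set W := span ℝ (hA.eigenvectorBasis.toBasis '' ((Finset.Ici i).image σA : Finset (Fin n)))
  have hdim : finrank ℝ (EuclideanSpace ℝ (Fin n)) < finrank ℝ V + finrank ℝ W := by
    simp only [V, W, Basis.finrank_span_image, Finset.card_image_of_injective _ σA.injective,
      Finset.card_image_of_injective _ σB.injective, Fin.card_Iic, Fin.card_Ici,
      finrank_euclideanSpace_fin]
    omega
  obtain ⟨x, ⟨hxV, hxW⟩, hx⟩ := exists_mem_inf_ne_zero_of_finrank_lt hdim
  have hA_le : sortedEig A hA i * ‖x‖ ^ 2 ≤ ⟪x, A.toEuclideanLin x⟫_ℝ := by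
    refine hA.le_inner_toEuclideanLin_self fun j hj => ?_
    obtain ⟨k, hk, rfl⟩ := Finset.mem_image.mp
      (hA.eigenvectorBasis.toBasis.mem_span_image.mp hxW (by simpa using hj))
    exact Tuple.monotone_sort hA.eigenvalues (Finset.mem_Ici.mp hk)
  have hB_le : ⟪x, B.toEuclideanLin x⟫_ℝ ≤ sortedEig B hB i * ‖x‖ ^ 2 := by
    refine hB.inner_toEuclideanLin_self_le fun j hj => ?_
    obtain ⟨k, hk, rfl⟩ := Finset.mem_image.mp
      (hB.eigenvectorBasis.toBasis.mem_span_image.mp hxV (by simpa using hj))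
    exact Tuple.monotone_sort hB.eigenvalues (Finset.mem_Iic.mp hk)
  exact le_of_mul_le_mul_right ((hA_le.trans (hd.inner_toEuclideanLin_self_mono x)).trans hB_le)
    (by positivity)

theorem Gp_mono {n p : ℕ} (hpn : p ≤ n) {A B : Matrix (Fin n) (Fin n) ℝ}
    (hA : A.IsHermitian) (hB : B.IsHermitian) (hd : (B - A).PosSemidef) :
    Gp p A ≤ Gp p B := by
  rw [Gp, Gp, dif_pos hA, dif_pos hB]
  refine Finset.sum_le_sum fun i _ => mul_le_mul_of_nonneg_left (sortedEig_mono hA hB hd i) ?_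
  have : (p : ℝ) ≤ n := by exact_mod_cast hpn
  split_ifs <;> linarith [(Nat.cast_nonneg p : (0 : ℝ) ≤ p)]

theorem IsLocalMax.deriv_deriv_nonpos {f : ℝ → ℝ} {a : ℝ} (h : IsLocalMax f a)
    (hf : ContinuousAt f a) : deriv (deriv f) a ≤ 0 := by
  -- If `f'' a > 0`, then `a` is also a local minimum, so `f` is locally constant and `f'' a = 0`.
  by_contra! hpos
  have hmin := isLocalMin_of_deriv_deriv_pos hpos h.deriv_eq_zero hf
  have hconst : f =ᶠ[𝓝 a] fun _ => f a := by
    filter_upwards [h, hmin] with y hy₁ hy₂ using le_antisymm hy₁ hy₂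
  have : deriv (deriv f) a = 0 := by
    rw [hconst.deriv.deriv_eq]
    simp
  linarith

theorem IsLocalMax.fderiv_fderiv_apply_self_nonpos {E : Type*} [NormedAddCommGroup E]
    [NormedSpace ℝ E] {f : E → ℝ} {x : E} (h : IsLocalMax f x) (hf : ContDiffAt ℝ 2 f x)
    (y : E) : fderiv ℝ (fderiv ℝ f) x y y ≤ 0 := by
  let γ : ℝ → E := fun t => x + t • y
  have hγ : ∀ t, HasDerivAt γ y t := fun t => by
    simpa only [id, one_smul] using ((hasDerivAt_id t).smul_const y).const_add x
  have hγ0 : γ 0 = x := by simp [γ]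
  have hγx : Tendsto γ (𝓝 0) (𝓝 x) := hγ0 ▸ (hγ 0).continuousAt.tendsto
  have hderiv : deriv (f ∘ γ) =ᶠ[𝓝 0] fun t => fderiv ℝ f (γ t) y := by
    filter_upwards [hγx.eventually (hf.eventually (by simp))] with t ht
    exact ((ht.differentiableAt (by simp)).hasFDerivAt.comp_hasDerivAt t (hγ t)).deriv
  have hsecond : HasDerivAt (fun t => fderiv ℝ f (γ t) y) (fderiv ℝ (fderiv ℝ f) x y y) 0 := by
    have hf' : HasFDerivAt (fderiv ℝ f) (fderiv ℝ (fderiv ℝ f) x) (γ 0) := by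
      rw [hγ0]
      exact ((hf.fderiv_right (m := 1) (by norm_num)).differentiableAt one_ne_zero).hasFDerivAt
    exact (ContinuousLinearMap.apply ℝ ℝ y).hasFDerivAt.comp_hasDerivAt 0
      (hf'.comp_hasDerivAt 0 (hγ 0))
  rw [← hsecond.deriv, ← hderiv.deriv_eq]
  exact (hγ0 ▸ h).comp_continuous (hγ 0).continuousAt |>.deriv_deriv_nonpos
    (hf.continuousAt.comp_of_eq (hγ 0).continuousAt hγ0)

theorem le_zero_of_frontier_of_isLocalMax {X : Type*} [TopologicalSpace X] {Ω : Set X}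
    (hΩo : IsOpen Ω) (hΩc : IsCompact (closure Ω)) {u : X → ℝ} (hu : ContinuousOn u (closure Ω))
    (hfrontier : ∀ x ∈ frontier Ω, u x ≤ 0) (hmax : ∀ x ∈ Ω, IsLocalMax u x → u x ≤ 0) :
    ∀ x ∈ Ω, u x ≤ 0 := by
  intro x hx
  obtain ⟨x₀, hx₀, hx₀max⟩ := hΩc.exists_isMaxOn ⟨x, subset_closure hx⟩ hu
  refine (hx₀max (subset_closure hx)).trans ?_
  by_cases hx₀Ω : x₀ ∈ Ω
  · refine hmax x₀ hx₀Ω ?_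
    filter_upwards [hΩo.mem_nhds hx₀Ω] with y hy using hx₀max (subset_closure hy)
  · exact hfrontier x₀ (hΩo.frontier_eq ▸ ⟨hx₀, hx₀Ω⟩)

section Hessian

variable {n : ℕ} {u w v : EuclideanSpace ℝ (Fin n) → ℝ} {x : EuclideanSpace ℝ (Fin n)}

theorem hessian_apply_eq_fderiv_fderiv (hu : DifferentiableAt ℝ (fderiv ℝ u) x) (i j : Fin n) :
    hessian u x i j
      = fderiv ℝ (fderiv ℝ u) x (EuclideanSpace.single i 1) (EuclideanSpace.single j 1) := by
  have : (fun y => pd u y j) = ContinuousLinearMap.apply ℝ ℝ (EuclideanSpace.single j 1) ∘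
      fderiv ℝ u := rfl
  rw [hessian, of_apply, pd, this, fderiv_comp x (ContinuousLinearMap.differentiableAt _) hu,
    ContinuousLinearMap.fderiv]
  rfl

theorem dotProduct_hessian_mulVec (hu : DifferentiableAt ℝ (fderiv ℝ u) x) (y : Fin n → ℝ) :
    y ⬝ᵥ (hessian u x *ᵥ y) = fderiv ℝ (fderiv ℝ u) x (WithLp.toLp 2 y) (WithLp.toLp 2 y) := by
  have hy : WithLp.toLp 2 y = ∑ i, y i • EuclideanSpace.single i (1 : ℝ) := by
    ext k
    simp [Pi.single_apply]
  simp only [hy, map_sum, map_smul, _root_.sum_apply, _root_.smul_apply,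
    smul_eq_mul, dotProduct, mulVec, hessian_apply_eq_fderiv_fderiv hu, Finset.mul_sum]
  rw [Finset.sum_comm]
  refine Finset.sum_congr rfl fun i _ => Finset.sum_congr rfl fun j _ => ?_
  ring

theorem isHermitian_hessian (hu : ContDiffAt ℝ 2 u x) : (hessian u x).IsHermitian := by
  have hsymm := hu.isSymmSndFDerivAt (by simp)
  have hdiff := (hu.fderiv_right (m := 1) (by norm_num)).differentiableAt one_ne_zero
  ext i j
  simp only [conjTranspose_apply, star_trivial, hessian_apply_eq_fderiv_fderiv hdiff]
  exact hsymm _ _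

theorem hessian_sub (hw : ContDiffAt ℝ 2 w x) (hv : ContDiffAt ℝ 2 v x) :
    hessian (fun y => w y - v y) x = hessian w x - hessian v x := by
  have hderiv : fderiv ℝ (fun y => w y - v y) =ᶠ[𝓝 x] fun y => fderiv ℝ w y - fderiv ℝ v y := by
    filter_upwards [hw.eventually (by simp), hv.eventually (by simp)] with y hwy hvy
    exact fderiv_fun_sub (hwy.differentiableAt (by simp)) (hvy.differentiableAt (by simp))
  have hw' := (hw.fderiv_right (m := 1) (by norm_num)).differentiableAt one_ne_zero
  have hv' := (hv.fderiv_right (m := 1) (by norm_num)).differentiableAt one_ne_zero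
  have hwv' := ((hw.sub hv).fderiv_right (m := 1) (by norm_num)).differentiableAt one_ne_zero
  ext i j
  rw [Matrix.sub_apply, hessian_apply_eq_fderiv_fderiv hw', hessian_apply_eq_fderiv_fderiv hv',
    hessian_apply_eq_fderiv_fderiv hwv', hderiv.fderiv_eq, fderiv_fun_sub hw' hv']
  rfl

theorem IsLocalMax.posSemidef_neg_hessian (h : IsLocalMax u x) (hu : ContDiffAt ℝ 2 u x) :
    (-hessian u x).PosSemidef := by
  refine .of_dotProduct_mulVec_nonneg (isHermitian_hessian hu).neg fun y => ?_
  have hdiff := (hu.fderiv_right (m := 1) (by norm_num)).differentiableAt one_ne_zero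
  rw [star_trivial, neg_mulVec, dotProduct_neg, dotProduct_hessian_mulVec hdiff, neg_nonneg]
  exact h.fderiv_fderiv_apply_self_nonpos hu _

end Hessian

section Schouten

variable {n : ℕ} {u w v : EuclideanSpace ℝ (Fin n) → ℝ} {x : EuclideanSpace ℝ (Fin n)}

theorem isHermitian_schouten (hu : ContDiffAt ℝ 2 u x) : (schouten u x).IsHermitian := by
  ext i j
  have hH := (isHermitian_hessian hu).apply i j
  rw [star_trivial] at hH
  simp [schouten, hH, mul_comm, one_apply, eq_comm]

theorem IsLocalMax.pd_eq_of_sub (h : IsLocalMax (fun y => w y - v y) x)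
    (hw : DifferentiableAt ℝ w x) (hv : DifferentiableAt ℝ v x) (i : Fin n) :
    pd w x i = pd v x i := by
  have hzero := h.fderiv_eq_zero
  rw [fderiv_fun_sub hw hv, sub_eq_zero] at hzero
  rw [pd, pd, hzero]

theorem schouten_sub_schouten_of_pd_eq (h : ∀ i, pd w x i = pd v x i) :
    schouten v x - schouten w x = hessian v x - hessian w x := by
  simp only [schouten, h]
  abel

theorem IsLocalMax.Gp_schouten_le_of_sub {p : ℕ} (hpn : p ≤ n)
    (h : IsLocalMax (fun y => w y - v y) x) (hw : ContDiffAt ℝ 2 w x)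
    (hv : ContDiffAt ℝ 2 v x) : Gp p (schouten w x) ≤ Gp p (schouten v x) := by
  refine Gp_mono hpn (isHermitian_schouten hw) (isHermitian_schouten hv) ?_
  rw [schouten_sub_schouten_of_pd_eq
      (h.pd_eq_of_sub (hw.differentiableAt (by simp)) (hv.differentiableAt (by simp))),
    ← neg_sub, ← hessian_sub hw hv]
  exact h.posSemidef_neg_hessian (hw.sub hv)

end Schouten

theorem comparison_principle_Gp_schouten {n p : ℕ} (hpn : p ≤ n)
    {Ω : Set (EuclideanSpace ℝ (Fin n))} (hΩo : IsOpen Ω) (hΩb : Bornology.IsBounded Ω)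
    {w v : EuclideanSpace ℝ (Fin n) → ℝ} (hw2 : ContDiffOn ℝ 2 w Ω) (hv2 : ContDiffOn ℝ 2 v Ω)
    (hwc : ContinuousOn w (closure Ω)) (hvc : ContinuousOn v (closure Ω))
    (hw : ∀ x ∈ Ω, -Real.exp (-2 * w x) ≤ Gp p (schouten w x))
    (hv : ∀ x ∈ Ω, Gp p (schouten v x) ≤ -Real.exp (-2 * v x))
    (hbd : ∀ x ∈ frontier Ω, w x ≤ v x) :
    ∀ x ∈ Ω, w x ≤ v x := by
  intro x hx
  refine sub_nonpos.mp (le_zero_of_frontier_of_isLocalMax (u := fun y => w y - v y) hΩo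
    hΩb.isCompact_closure (hwc.sub hvc) (fun y hy => sub_nonpos.mpr (hbd y hy))
    (fun y hy hmax => ?_) x hx)
  have hGp := (hw y hy).trans <| (hmax.Gp_schouten_le_of_sub hpn (hw2.contDiffAt
    (hΩo.mem_nhds hy)) (hv2.contDiffAt (hΩo.mem_nhds hy))).trans (hv y hy)
  have := Real.exp_le_exp.mp (neg_le_neg_iff.mp hGp)
  linarith

theorem dirichlet_uniqueness_negative_general (n p : ℕ) (hp2 : p ≤ n - 1)
    (Ω : Set (EuclideanSpace ℝ (Fin n))) (hΩo : IsOpen Ω)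
    (hΩb : Bornology.IsBounded Ω)
    (w v : EuclideanSpace ℝ (Fin n) → ℝ)
    (hw2 : ContDiffOn ℝ 2 w Ω) (hv2 : ContDiffOn ℝ 2 v Ω)
    (hwc : ContinuousOn w (closure Ω)) (hvc : ContinuousOn v (closure Ω))
    (hew : ∀ x ∈ Ω, Gp p (schouten w x) = -Real.exp (-2 * w x))
    (hev : ∀ x ∈ Ω, Gp p (schouten v x) = -Real.exp (-2 * v x))
    (hbd : ∀ x ∈ frontier Ω, w x = v x) :
    ∀ x ∈ Ω, w x = v x := by
  have hpn : p ≤ n := hp2.trans (Nat.sub_le n 1)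
  intro x hx
  exact le_antisymm
    (comparison_principle_Gp_schouten hpn hΩo hΩb hw2 hv2 hwc hvc (fun y hy => (hew y hy).ge)
      (fun y hy => (hev y hy).le) (fun y hy => (hbd y hy).le) x hx)
    (comparison_principle_Gp_schouten hpn hΩo hΩb hv2 hw2 hvc hwc (fun y hy => (hev y hy).ge)
      (fun y hy => (hew y hy).le) (fun y hy => (hbd y hy).ge) x hx)

/-- **Uniqueness for the Dirichlet problem with curvature `−1`**: two solutions of
`G_p(A^u) = −e^{-2u}` on a bounded domain `Ω`, continuous up to the boundary and agreeing on
`∂Ω`, coincide on `Ω` (by the maximum principle). -/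
theorem dirichlet_uniqueness_negative (n p : ℕ) (hn : 3 ≤ n) (hp1 : 1 ≤ p) (hp2 : p ≤ n - 1)
    (Ω : Set (EuclideanSpace ℝ (Fin n))) (hΩo : IsOpen Ω)
    (hΩb : Bornology.IsBounded Ω) (hΩc : IsConnected Ω)
    (w v : EuclideanSpace ℝ (Fin n) → ℝ)
    (hw2 : ContDiffOn ℝ 2 w Ω) (hv2 : ContDiffOn ℝ 2 v Ω)
    (hwc : ContinuousOn w (closure Ω)) (hvc : ContinuousOn v (closure Ω))
    (hew : ∀ x ∈ Ω, Gp p (schouten w x) = -Real.exp (-2 * w x))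
    (hev : ∀ x ∈ Ω, Gp p (schouten v x) = -Real.exp (-2 * v x))
    (hbd : ∀ x ∈ frontier Ω, w x = v x) :
    ∀ x ∈ Ω, w x = v x :=
  dirichlet_uniqueness_negative_general n p hp2 Ω hΩo hΩb w v hw2 hv2 hwc hvc hew hev hbd

end
end
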